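/- Let Λ be a proper, source-free topological k-graph, and for each n ∈ ℕ^k let α_n : X_n → Y_n be the map α_n(f)(x) = f(x(0,n)) on finitely supported continuous functions, extended by continuity. Then each α_n is injective: if f₁, f₂ ∈ X_n satisfy α_n(f₁) = α_n(f₂), then f₁ = f₂. -/

import Mathlib

/-- A topological `k`-graph (Yeend): a small category, presented algebraically on
its (second-countable, locally compact, Hausdorff) space of morphisms with
objects identified with identity morphisms, together with a continuous degree
functor `d : Λ → ℕ^k` satisfying the unique factorisation property.  The range
map is continuous, the source map is a local homeomorphism, and composition
(defined on the set of composable pairs) is continuous and open. -/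
structure TopKGraph (k : ℕ) where
  M : Type
  ts : TopologicalSpace M
  t2 : @T2Space M ts
  lc : @LocallyCompactSpace M ts
  sc : @SecondCountableTopology M ts
  r : M → M
  s : M → M
  comp : M → M → M
  d : M → Fin k → ℕ
  rr : ∀ lam, r (r lam) = r lam
  sr : ∀ lam, s (r lam) = r lam
  rs : ∀ lam, r (s lam) = s lam
  ss' : ∀ lam, s (s lam) = s lam
  r_comp : ∀ {lam mu}, s lam = r mu → r (comp lam mu) = r lam
  s_comp : ∀ {lam mu}, s lam = r mu → s (comp lam mu) = s mu
  comp_assoc : ∀ {lam mu nu}, s lam = r mu → s mu = r nu →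
      comp (comp lam mu) nu = comp lam (comp mu nu)
  id_comp : ∀ lam, comp (r lam) lam = lam
  comp_id : ∀ lam, comp lam (s lam) = lam
  d_comp : ∀ {lam mu}, s lam = r mu → d (comp lam mu) = d lam + d mu
  d_r : ∀ lam, d (r lam) = 0
  d_s : ∀ lam, d (s lam) = 0
  continuous_r : @Continuous M M ts ts r
  continuous_s : @Continuous M M ts ts s
  isLocalHomeomorph_s : @IsLocalHomeomorph M M ts ts s
  continuousOn_comp : @ContinuousOn (M × M) M (@instTopologicalSpaceProd M M ts ts) ts
      (fun p => comp p.1 p.2) {p | s p.1 = r p.2}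
  isOpenMap_comp : ∀ V : Set (M × M), @IsOpen (M × M) (@instTopologicalSpaceProd M M ts ts) V →
      @IsOpen M ts ((fun p : M × M => comp p.1 p.2) '' (V ∩ {p | s p.1 = r p.2}))
  isOpen_deg : ∀ n : Fin k → ℕ, @IsOpen M ts {lam | d lam = n}
  factor : ∀ (lam : M) (m n : Fin k → ℕ), d lam = m + n →
      ∃! p : M × M, s p.1 = r p.2 ∧ comp p.1 p.2 = lam ∧ d p.1 = m ∧ d p.2 = n

attribute [instance] TopKGraph.ts TopKGraph.t2 TopKGraph.lc TopKGraph.sc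

variable {k : ℕ}

/-- An `s`-section: a set contained in an open set on which the source map is
injective (equivalently, since `s` is a local homeomorphism, on which `s`
restricts to a homeomorphism onto its image). -/
def TopKGraph.IsSSection (G : TopKGraph k) (W : Set G.M) : Prop :=
  ∃ U : Set G.M, IsOpen U ∧ W ⊆ U ∧ Set.InjOn G.s U

/-- A topological `k`-graph is proper if, for each `m ∈ ℕ^k`, the preimage under
`r|_{Λ^m}` of any compact set is compact. -/
def TopKGraph.Proper (G : TopKGraph k) : Prop :=
  ∀ (m : Fin k → ℕ) (K : Set G.M), IsCompact K →
    IsCompact {lam : G.M | G.d lam = m ∧ G.r lam ∈ K}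

/-- A topological `k`-graph is source-free if `vΛ^{e_i} ≠ ∅` for every vertex `v`
and every `i`. -/
def TopKGraph.SourceFree (G : TopKGraph k) : Prop :=
  ∀ v : G.M, G.r v = v → ∀ i : Fin k,
    ∃ lam : G.M, G.d lam = Pi.single i 1 ∧ G.r lam = v

/-- A normalised `𝕋`-valued 2-cocycle on a topological `k`-graph. -/
def TopKGraph.IsCocycle (G : TopKGraph k) (c : G.M → G.M → Circle) : Prop :=
  (∀ lam mu nu, G.s lam = G.r mu → G.s mu = G.r nu →
      c lam mu * c (G.comp lam mu) nu = c lam (G.comp mu nu) * c mu nu) ∧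
  (∀ lam, c lam (G.s lam) = 1) ∧ (∀ lam, c (G.r lam) lam = 1)

/-- A continuous normalised `𝕋`-valued 2-cocycle on a topological `k`-graph:
normalised, satisfies the cocycle identity, and is continuous on the set of
composable pairs. -/
def TopKGraph.IsContinuousCocycle (G : TopKGraph k) (c : G.M → G.M → Circle) : Prop :=
  G.IsCocycle c ∧
    ContinuousOn (fun p : G.M × G.M => c p.1 p.2) {p | G.s p.1 = G.r p.2}
open scoped ENNReal ComplexConjugate

/-- The unique factorisation `lam = p.1 ⬝ p.2` of a path `lam` with `d(p.1) = m`
(meaningful whenever `m ≤ d lam`, by the unique factorisation property); thus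
`(pathFac G m lam).1 = λ(0,m)` and, for `lam ∈ Λ^n`, `(pathFac G m lam).2 = λ(m,n)`. -/
noncomputable def TopKGraph.pathFac (G : TopKGraph k) (m : Fin k → ℕ) (lam : G.M) :
    G.M × G.M :=
  letI := Classical.propDecidable; if h : ∃ p : G.M × G.M, G.s p.1 = G.r p.2 ∧ G.comp p.1 p.2 = lam ∧
      G.d p.1 = m ∧ G.d p.2 = G.d lam - m then h.choose else (lam, lam)

/-- An infinite path in `Λ`: a degree-preserving functor `x : Ω_k → Λ`, recorded
by its segments `x(m,n) ∈ Λ^{n-m}` for `m ≤ n` in `ℕ^k`. -/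
structure TopKGraph.InfPath (G : TopKGraph k) where
  seg : (Fin k → ℕ) → (Fin k → ℕ) → G.M
  d_seg : ∀ {m n : Fin k → ℕ}, m ≤ n → G.d (seg m n) = n - m
  seg_id : ∀ m : Fin k → ℕ, seg m m = G.r (seg m m)
  s_seg : ∀ {m n p : Fin k → ℕ}, m ≤ n → n ≤ p → G.s (seg m n) = G.r (seg n p)
  comp_seg : ∀ {m n p : Fin k → ℕ}, m ≤ n → n ≤ p →
      G.comp (seg m n) (seg n p) = seg m p

/-- The cylinder set `Z(U) = {x ∈ Λ^∞ : x(0,n) ∈ U for some n}`. -/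
def TopKGraph.cyl (G : TopKGraph k) (U : Set G.M) : Set G.InfPath :=
  {x | ∃ n : Fin k → ℕ, x.seg 0 n ∈ U}

/-- The topology on the infinite-path space `Λ^∞` is generated by the cylinder
sets `Z(U)` of open subsets `U` of the `Λ^n`, `n ∈ ℕ^k`. -/
instance TopKGraph.instTopInfPath (G : TopKGraph k) : TopologicalSpace G.InfPath :=
  TopologicalSpace.generateFrom
    {S | ∃ (n : Fin k → ℕ) (U : Set G.M), IsOpen U ∧ (∀ lam ∈ U, G.d lam = n) ∧
      S = G.cyl U}

/-- The shift map `T^p : Λ^∞ → Λ^∞`, `T^p(x)(m,n) = x(m+p, n+p)`. -/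
def TopKGraph.shift (G : TopKGraph k) (p : Fin k → ℕ) (x : G.InfPath) : G.InfPath where
  seg m n := x.seg (m + p) (n + p)
  d_seg := by
    intro m n h
    rw [x.d_seg (add_le_add h (le_refl p))]
    funext i
    simp only [Pi.sub_apply, Pi.add_apply]
    omega
  seg_id m := x.seg_id (m + p)
  s_seg := fun h1 h2 => x.s_seg (add_le_add h1 (le_refl p)) (add_le_add h2 (le_refl p))
  comp_seg := fun h1 h2 => x.comp_seg (add_le_add h1 (le_refl p)) (add_le_add h2 (le_refl p))

/-!
Since `f₁` and `f₂` vanish off `Λ^n`, it suffices that every `λ ∈ Λ^n` is `x(0,n)` for some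
infinite path `x`. Source-freeness lets one extend `λ` again and again, each time raising every
coordinate of the degree, to a chain of prefixes `λ = λ₀ ≤ λ₁ ≤ ⋯`. By unique factorisation the
segment `λ_j(m,p)` does not depend on `j` once `p ≤ d(λ_j)`, and these segments form an infinite
path `x` with `x(0,d(λ)) = λ`.
-/

namespace TopKGraph

variable {G : TopKGraph k}

def IsPrefix (G : TopKGraph k) (lam mu : G.M) : Prop :=
  ∃ nu, G.s lam = G.r nu ∧ G.comp lam nu = mu

namespace IsPrefix

lemma refl (lam : G.M) : G.IsPrefix lam lam :=
  ⟨G.s lam, (G.rs lam).symm, G.comp_id lam⟩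

lemma trans {lam mu nu : G.M} (h₁ : G.IsPrefix lam mu) (h₂ : G.IsPrefix mu nu) :
    G.IsPrefix lam nu := by
  obtain ⟨a, ha, rfl⟩ := h₁
  obtain ⟨b, hb, rfl⟩ := h₂
  rw [G.s_comp ha] at hb
  exact ⟨G.comp a b, ha.trans (G.r_comp hb).symm, (G.comp_assoc ha hb).symm⟩

lemma d_le {lam mu : G.M} (h : G.IsPrefix lam mu) : G.d lam ≤ G.d mu := by
  obtain ⟨nu, hs, rfl⟩ := h
  rw [G.d_comp hs]
  exact fun i => Nat.le_add_right _ _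

end IsPrefix

lemma pathFac_spec {lam : G.M} {m : Fin k → ℕ} (hm : m ≤ G.d lam) :
    G.s (G.pathFac m lam).1 = G.r (G.pathFac m lam).2 ∧
      G.comp (G.pathFac m lam).1 (G.pathFac m lam).2 = lam ∧
      G.d (G.pathFac m lam).1 = m ∧ G.d (G.pathFac m lam).2 = G.d lam - m := by
  have hex := (G.factor lam m (G.d lam - m) (add_tsub_cancel_of_le hm).symm).exists
  rw [pathFac, dif_pos hex]
  exact hex.choose_spec

lemma pathFac_eq {lam a b : G.M} {m : Fin k → ℕ} (hs : G.s a = G.r b)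
    (hc : G.comp a b = lam) (ha : G.d a = m) : G.pathFac m lam = (a, b) := by
  subst hc ha
  have hd : G.d (G.comp a b) = G.d a + G.d b := G.d_comp hs
  obtain ⟨h₁, h₂, h₃, h₄⟩ := pathFac_spec (hd ▸ le_self_add : G.d a ≤ G.d (G.comp a b))
  rw [hd, add_tsub_cancel_left] at h₄
  exact (G.factor _ _ _ hd).unique ⟨h₁, h₂, h₃, h₄⟩ ⟨hs, rfl, rfl, rfl⟩

lemma s_pathFac_snd {lam : G.M} {m : Fin k → ℕ} (hm : m ≤ G.d lam) :
    G.s (G.pathFac m lam).2 = G.s lam := by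
  obtain ⟨h₁, h₂, -⟩ := pathFac_spec hm
  have := G.s_comp h₁
  rwa [h₂, eq_comm] at this

lemma pathFac_comp {a b : G.M} {q : Fin k → ℕ} (hs : G.s a = G.r b) (hq : q ≤ G.d a) :
    G.pathFac q (G.comp a b) = ((G.pathFac q a).1, G.comp (G.pathFac q a).2 b) := by
  obtain ⟨h₁, h₂, h₃, -⟩ := pathFac_spec hq
  have hsb : G.s (G.pathFac q a).2 = G.r b := (s_pathFac_snd hq).trans hs
  refine pathFac_eq (by rw [G.r_comp hsb, h₁]) ?_ h₃
  rw [← G.comp_assoc h₁ hsb, h₂]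


lemma isPrefix_pathFac_fst {lam : G.M} {m : Fin k → ℕ} (hm : m ≤ G.d lam) :
    G.IsPrefix (G.pathFac m lam).1 lam :=
  ⟨_, (pathFac_spec hm).1, (pathFac_spec hm).2.1⟩

lemma IsPrefix.pathFac_fst {lam mu : G.M} {m : Fin k → ℕ} (h : G.IsPrefix lam mu)
    (hm : m ≤ G.d lam) : (G.pathFac m mu).1 = (G.pathFac m lam).1 := by
  obtain ⟨nu, hs, rfl⟩ := h
  rw [pathFac_comp hs hm]

lemma eq_r_of_d_eq_zero {lam : G.M} (h : G.d lam = 0) : lam = G.r lam := by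
  have : (lam, G.s lam) = (G.r lam, lam) := (G.factor lam 0 0 (by rw [h, add_zero])).unique
    ⟨(G.rs lam).symm, G.comp_id lam, h, G.d_s lam⟩ ⟨G.sr lam, G.id_comp lam, G.d_r lam, h⟩
  exact congrArg Prod.fst this

/-- The segment `λ(m,p)`: what remains of `λ(0,p)` after removing `λ(0,m)`. -/
noncomputable def subpath (G : TopKGraph k) (m p : Fin k → ℕ) (lam : G.M) : G.M :=
  (G.pathFac m (G.pathFac p lam).1).2

lemma d_subpath {lam : G.M} {m p : Fin k → ℕ} (hm : m ≤ p) (hp : p ≤ G.d lam) :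
    G.d (G.subpath m p lam) = p - m := by
  have hd := (pathFac_spec hp).2.2.1
  rw [subpath, (pathFac_spec (hm.trans_eq hd.symm)).2.2.2, hd]

lemma IsPrefix.subpath_eq {lam mu : G.M} {m p : Fin k → ℕ} (h : G.IsPrefix lam mu)
    (hp : p ≤ G.d lam) : G.subpath m p mu = G.subpath m p lam := by
  rw [subpath, h.pathFac_fst hp, subpath]

lemma subpath_zero_d (lam : G.M) : G.subpath 0 (G.d lam) lam = lam := by
  rw [subpath, pathFac_eq (G.rs lam).symm (G.comp_id lam) rfl,
    pathFac_eq (G.sr lam) (G.id_comp lam) (G.d_r lam)]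

lemma s_subpath {lam : G.M} {m p q : Fin k → ℕ} (hm : m ≤ p) (hp : p ≤ q)
    (hq : q ≤ G.d lam) : G.s (G.subpath m p lam) = G.r (G.subpath p q lam) := by
  set mu := (G.pathFac q lam).1
  have hpmu : p ≤ G.d mu := (pathFac_spec hq).2.2.1 ▸ hp
  rw [(isPrefix_pathFac_fst hq).subpath_eq hpmu, subpath,
    s_pathFac_snd (hm.trans_eq (pathFac_spec hpmu).2.2.1.symm)]
  exact (pathFac_spec hpmu).1

lemma comp_subpath {lam : G.M} {m p q : Fin k → ℕ} (hm : m ≤ p) (hp : p ≤ q)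
    (hq : q ≤ G.d lam) :
    G.comp (G.subpath m p lam) (G.subpath p q lam) = G.subpath m q lam := by
  set mu := (G.pathFac q lam).1
  have hpmu : p ≤ G.d mu := (pathFac_spec hq).2.2.1 ▸ hp
  obtain ⟨hs, hc, hd, -⟩ := pathFac_spec hpmu
  rw [(isPrefix_pathFac_fst hq).subpath_eq hpmu]
  change _ = (G.pathFac m mu).2
  conv_rhs => rw [← hc, pathFac_comp hs (hm.trans_eq hd.symm)]
  rfl

section Chain

variable {c : ℕ → G.M} (hc : ∀ j, G.IsPrefix (c j) (c (j + 1)))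
include hc

lemma isPrefix_of_le {i j : ℕ} (h : i ≤ j) : G.IsPrefix (c i) (c j) := by
  induction j, h using Nat.le_induction with
  | base => exact .refl _
  | succ j _ ih => exact ih.trans (hc j)

lemma subpath_chain_eq {m p : Fin k → ℕ} {i j : ℕ} (hi : p ≤ G.d (c i))
    (hj : p ≤ G.d (c j)) : G.subpath m p (c i) = G.subpath m p (c j) := by
  rcases le_total i j with h | h
  · exact ((isPrefix_of_le hc h).subpath_eq hi).symm
  · exact (isPrefix_of_le hc h).subpath_eq hj

variable (hunb : ∀ p, ∃ j, p ≤ G.d (c j))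

noncomputable def InfPath.ofChain : G.InfPath where
  seg m p := G.subpath m p (c (hunb p).choose)
  d_seg h := d_subpath h (hunb _).choose_spec
  seg_id m := eq_r_of_d_eq_zero (by rw [d_subpath le_rfl (hunb m).choose_spec, tsub_self])
  s_seg {_ n p} h₁ h₂ := by
    rw [subpath_chain_eq hc (hunb n).choose_spec (h₂.trans (hunb p).choose_spec)]
    exact s_subpath h₁ h₂ (hunb p).choose_spec
  comp_seg {_ n p} h₁ h₂ := by
    rw [subpath_chain_eq hc (hunb n).choose_spec (h₂.trans (hunb p).choose_spec)]
    exact comp_subpath h₁ h₂ (hunb p).choose_spec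

lemma InfPath.ofChain_seg {m p : Fin k → ℕ} {j : ℕ} (hj : p ≤ G.d (c j)) :
    (InfPath.ofChain hc hunb).seg m p = G.subpath m p (c j) :=
  subpath_chain_eq hc (hunb p).choose_spec hj

end Chain

lemma SourceFree.exists_isPrefix_d_lt (hSF : G.SourceFree) (lam : G.M) :
    ∃ mu, G.IsPrefix lam mu ∧ ∀ i, G.d lam i < G.d mu i := by
  suffices ∀ t : Finset (Fin k), ∃ mu, G.IsPrefix lam mu ∧ ∀ i ∈ t, G.d lam i < G.d mu i by
    simpa using this Finset.univ
  intro t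
  induction t using Finset.induction_on with
  | empty => exact ⟨lam, .refl lam, by simp⟩
  | insert i t _ ih =>
    obtain ⟨mu, hmu, hlt⟩ := ih
    obtain ⟨e, he, hr⟩ := hSF (G.s mu) (G.rs mu) i
    refine ⟨G.comp mu e, hmu.trans ⟨e, hr.symm, rfl⟩, fun j hj => ?_⟩
    rw [G.d_comp hr.symm, he, Pi.add_apply]
    rcases Finset.mem_insert.1 hj with rfl | hj
    · rw [Pi.single_eq_same]
      exact Nat.lt_add_one_of_le (hmu.d_le j)
    · have := hlt j hj
      omega

theorem SourceFree.exists_infPath_seg_d (hSF : G.SourceFree) (lam : G.M) :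
    ∃ x : G.InfPath, x.seg 0 (G.d lam) = lam := by
  choose grow hgrow hlt using hSF.exists_isPrefix_d_lt
  let c : ℕ → G.M := fun j => grow^[j] lam
  have hsucc : ∀ j, c (j + 1) = grow (c j) := fun j =>
    Function.iterate_succ_apply' grow j lam
  have hc : ∀ j, G.IsPrefix (c j) (c (j + 1)) := fun j => hsucc j ▸ hgrow (c j)
  have hdeg : ∀ j i, j ≤ G.d (c j) i := by
    intro j i
    induction j with
    | zero => exact Nat.zero_le _
    | succ j ih =>
      have := hlt (c j) i
      rw [hsucc]
      omega
  have hunb : ∀ p, ∃ j, p ≤ G.d (c j) := fun p =>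
    ⟨Finset.univ.sup p, fun i => (Finset.le_sup (Finset.mem_univ i)).trans (hdeg _ i)⟩
  exact ⟨.ofChain hc hunb,
    (InfPath.ofChain_seg hc hunb (j := 0) le_rfl).trans (subpath_zero_d lam)⟩

end TopKGraph

theorem alpha_injective_general {k : ℕ} (G : TopKGraph k)
    (hSF : G.SourceFree) (n : Fin k → ℕ)
    (f₁ f₂ : G.M → ℂ)
    (hf₁d : ∀ lam, f₁ lam ≠ 0 → G.d lam = n)
    (hf₂d : ∀ lam, f₂ lam ≠ 0 → G.d lam = n)
    (h : ∀ x : G.InfPath, f₁ (x.seg 0 n) = f₂ (x.seg 0 n)) :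
    f₁ = f₂ := by
  funext lam
  by_cases hd : G.d lam = n
  · obtain ⟨x, hx⟩ := hSF.exists_infPath_seg_d lam
    subst hd
    simpa only [hx] using h x
  · rw [not_imp_comm.1 (hf₁d lam) hd, not_imp_comm.1 (hf₂d lam) hd]

/-- Let `Λ` be a proper, source-free topological `k`-graph.  The
map `α_n : X_n → Y_n`, `α_n(f)(x) = f(x(0,n))`, is injective: if `f₁, f₂ ∈ X_n`
satisfy `α_n(f₁) = α_n(f₂)` then `f₁ = f₂`. -/
theorem alpha_injective {k : ℕ} (G : TopKGraph k)
    (hP : G.Proper) (hSF : G.SourceFree) (n : Fin k → ℕ)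
    (f₁ f₂ : G.M → ℂ)
    (hf₁ : Continuous f₁) (hf₁c : HasCompactSupport f₁)
    (hf₁d : ∀ lam, f₁ lam ≠ 0 → G.d lam = n)
    (hf₂ : Continuous f₂) (hf₂c : HasCompactSupport f₂)
    (hf₂d : ∀ lam, f₂ lam ≠ 0 → G.d lam = n)
    (h : ∀ x : G.InfPath, f₁ (x.seg 0 n) = f₂ (x.seg 0 n)) :
    f₁ = f₂ :=
  alpha_injective_general G hSF n f₁ f₂ hf₁d hf₂d h
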